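/- (Lemma 3.) For all x ∈ ℝ^d and n ∈ ℕ₀, if q_{n+1}(x) = g(x), then q_n(x) = g(x), where q_n = D^n(max(g, 0)). -/

import Mathlib

/-! The iterates `q_n` increase in `n`, because `D` is monotone and `q_0 ≤ D q_0`, and every
iterate dominates `g`. Hence `q_n(z) ≤ q_{n+1}(z) = g(z) ≤ q_n(z)`. -/

open Finset

/-- The weighted arithmetic average operator:
`(A f)(y) = ∑ k, α k * f (y - x k)`. -/
noncomputable def avgOp (d m : ℕ) (α : Fin m → ℝ) (x : Fin m → (Fin d → ℝ))
    (f : (Fin d → ℝ) → ℝ) : (Fin d → ℝ) → ℝ :=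
  fun y => ∑ k, α k * f (y - x k)

/-- The Bermudan iteration operator: `(D f)(y) = max (c * (A f)(y)) (g y)`. -/
noncomputable def bermOp (d m : ℕ) (α : Fin m → ℝ) (x : Fin m → (Fin d → ℝ))
    (c : ℝ) (g : (Fin d → ℝ) → ℝ) (f : (Fin d → ℝ) → ℝ) : (Fin d → ℝ) → ℝ :=
  fun y => max (c * avgOp d m α x f y) (g y)

section

variable {d m : ℕ} {α : Fin m → ℝ} {x : Fin m → (Fin d → ℝ)} {c : ℝ} {g : (Fin d → ℝ) → ℝ}

theorem avgOp_mono (hα : ∀ k, 0 ≤ α k) : Monotone (avgOp d m α x) :=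
  fun _ _ hff' _ => sum_le_sum fun k _ => mul_le_mul_of_nonneg_left (hff' _) (hα k)

theorem avgOp_nonneg (hα : ∀ k, 0 ≤ α k) {f : (Fin d → ℝ) → ℝ} (hf : 0 ≤ f) :
    0 ≤ avgOp d m α x f :=
  fun _ => sum_nonneg fun k _ => mul_nonneg (hα k) (hf _)

theorem bermOp_mono (hα : ∀ k, 0 ≤ α k) (hc : 0 ≤ c) : Monotone (bermOp d m α x c g) :=
  fun _ _ hff' y => max_le_max (mul_le_mul_of_nonneg_left (avgOp_mono hα hff' y) hc) le_rfl

theorem le_bermOp (f : (Fin d → ℝ) → ℝ) : g ≤ bermOp d m α x c g f :=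
  fun _ => le_max_right _ _

theorem max_zero_le_bermOp_max_zero (hα : ∀ k, 0 ≤ α k) (hc : 0 ≤ c) :
    (fun y => max (g y) 0) ≤ bermOp d m α x c g (fun y => max (g y) 0) := by
  intro y
  have hA : 0 ≤ c * avgOp d m α x (fun y => max (g y) 0) y :=
    mul_nonneg hc (avgOp_nonneg hα (fun _ => le_max_right _ _) y)
  exact max_le (le_max_right _ _) (hA.trans (le_max_left _ _))

theorem monotone_iterate_bermOp (hα : ∀ k, 0 ≤ α k) (hc : 0 ≤ c) :
    Monotone fun n => (bermOp d m α x c g)^[n] (fun y => max (g y) 0) :=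
  (bermOp_mono hα hc).monotone_iterate_of_le_map (max_zero_le_bermOp_max_zero hα hc)

theorem le_iterate_bermOp : ∀ n, g ≤ (bermOp d m α x c g)^[n] (fun y => max (g y) 0)
  | 0 => fun _ => le_max_left _ _
  | n + 1 => by
    rw [Function.iterate_succ_apply']
    exact le_bermOp _

end

theorem q_eq_g_of_succ_eq_g_general (d m : ℕ)
    (α : Fin m → ℝ) (hα : ∀ k, α k ∈ Set.Icc (0:ℝ) 1)
    (x : Fin m → (Fin d → ℝ))
    (c : ℝ) (hc : c ∈ Set.Ioo (0:ℝ) 1)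
    (g : (Fin d → ℝ) → ℝ)
    (q : ℕ → (Fin d → ℝ) → ℝ)
    (hq : ∀ n, q n = (bermOp d m α x c g)^[n] (fun y => max (g y) 0)) :
    ∀ (z : Fin d → ℝ) (n : ℕ), q (n + 1) z = g z → q n z = g z := by
  intro z n hn
  have hα₀ : ∀ k, 0 ≤ α k := fun k => (hα k).1
  have hq_mono : q n ≤ q (n + 1) := by
    simpa only [hq] using monotone_iterate_bermOp hα₀ hc.1.le n.le_succ
  have hg_le : g ≤ q n := hq n ▸ le_iterate_bermOp n
  exact le_antisymm (hn ▸ hq_mono z) (hg_le z)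

/-- Lemma 3: if `q_{n+1}(x) = g(x)` then `q_n(x) = g(x)`. -/
theorem q_eq_g_of_succ_eq_g (d m : ℕ) (hm : 1 ≤ m)
    (α : Fin m → ℝ) (hα : ∀ k, α k ∈ Set.Icc (0:ℝ) 1) (hsum : ∑ k, α k = 1)
    (x : Fin m → (Fin d → ℝ))
    (c : ℝ) (hc : c ∈ Set.Ioo (0:ℝ) 1)
    (g h : (Fin d → ℝ) → ℝ)
    (hg : ∀ y, g y ≤ avgOp d m α x g y)
    (hh : ∀ y, avgOp d m α x h y = h y)
    (hgh : ∀ y, max 0 (g y) ≤ h y)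
    (q : ℕ → (Fin d → ℝ) → ℝ)
    (hq : ∀ n, q n = (bermOp d m α x c g)^[n] (fun y => max (g y) 0)) :
    ∀ (z : Fin d → ℝ) (n : ℕ), q (n + 1) z = g z → q n z = g z :=
  q_eq_g_of_succ_eq_g_general d m α hα x c hc g q hq
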